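/- Let φ be an LTL formula and B := B(φ) its basis. For every C ⊆ B: (1) flatten(φ,C) ∈ Σ₂; (2) φ and flatten(φ,C) are equivalent under context ⟨C,B⟩; (3) if C ⊆ C' ⊆ B then flatten(φ,C) ⊨ flatten(φ,C'). -/

import Mathlib

namespace LTLNorm

/-- LTL formulas in negation normal form. -/
inductive F (Ap : Type) : Type
  | tt    : F Ap
  | ff    : F Ap
  | pos   : Ap → F Ap
  | nlit  : Ap → F Ap
  | and   : F Ap → F Ap → F Ap
  | or    : F Ap → F Ap → F Ap
  | next  : F Ap → F Ap
  | untl  : F Ap → F Ap → F Ap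
  | wuntl : F Ap → F Ap → F Ap
  | rel   : F Ap → F Ap → F Ap
  | srel  : F Ap → F Ap → F Ap
  deriving DecidableEq

/-- Infinite words over the alphabet `2^Ap`. -/
abbrev Word (Ap : Type) := ℕ → Set Ap

/-- Suffix of a word starting at position `i`. -/
def suff {Ap : Type} (w : Word Ap) (i : ℕ) : Word Ap := fun n => w (n + i)

/-- Satisfaction relation. -/
def Sat {Ap : Type} : Word Ap → F Ap → Prop
  | _, F.tt => True
  | _, F.ff => False
  | w, F.pos a => a ∈ w 0
  | w, F.nlit a => a ∉ w 0
  | w, F.and φ ψ => Sat w φ ∧ Sat w ψ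
  | w, F.or φ ψ => Sat w φ ∨ Sat w ψ
  | w, F.next φ => Sat (suff w 1) φ
  | w, F.untl φ ψ => ∃ k, Sat (suff w k) ψ ∧ ∀ j < k, Sat (suff w j) φ
  | w, F.wuntl φ ψ => (∀ k, Sat (suff w k) φ) ∨ ∃ k, Sat (suff w k) ψ ∧ ∀ j < k, Sat (suff w j) φ
  | w, F.srel φ ψ => ∃ k, Sat (suff w k) φ ∧ ∀ j ≤ k, Sat (suff w j) ψ
  | w, F.rel φ ψ => (∀ k, Sat (suff w k) ψ) ∨ ∃ k, Sat (suff w k) φ ∧ ∀ j ≤ k, Sat (suff w j) ψ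

/-- Equivalence of formulas. -/
def Equiv {Ap : Type} (φ ψ : F Ap) : Prop := ∀ w : Word Ap, Sat w φ ↔ Sat w ψ

/-- Entailment: every word satisfying `φ` satisfies `ψ`. -/
def Entails {Ap : Type} (φ ψ : F Ap) : Prop := ∀ w : Word Ap, Sat w φ → Sat w ψ

/-- F φ := tt U φ -/
def Ff {Ap : Type} (φ : F Ap) : F Ap := F.untl F.tt φ
/-- G φ := φ W ff -/
def Gf {Ap : Type} (φ : F Ap) : F Ap := F.wuntl φ F.ff
/-- GF φ := G (F φ) -/
def GFf {Ap : Type} (φ : F Ap) : F Ap := Gf (Ff φ)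
/-- FG φ := F (G φ) -/
def FGf {Ap : Type} (φ : F Ap) : F Ap := Ff (Gf φ)

/-- Number of nodes of the syntax tree. -/
def size {Ap : Type} : F Ap → ℕ
  | F.tt => 1
  | F.ff => 1
  | F.pos _ => 1
  | F.nlit _ => 1
  | F.and φ ψ => size φ + size ψ + 1
  | F.or φ ψ => size φ + size ψ + 1
  | F.next φ => size φ + 1
  | F.untl φ ψ => size φ + size ψ + 1
  | F.wuntl φ ψ => size φ + size ψ + 1
  | F.rel φ ψ => size φ + size ψ + 1
  | F.srel φ ψ => size φ + size ψ + 1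

/-- The dual of a formula in negation normal form. -/
def dual {Ap : Type} : F Ap → F Ap
  | F.tt => F.ff
  | F.ff => F.tt
  | F.pos a => F.nlit a
  | F.nlit a => F.pos a
  | F.and φ ψ => F.or (dual φ) (dual ψ)
  | F.or φ ψ => F.and (dual φ) (dual ψ)
  | F.next φ => F.next (dual φ)
  | F.untl φ ψ => F.rel (dual φ) (dual ψ)
  | F.rel φ ψ => F.untl (dual φ) (dual ψ)
  | F.wuntl φ ψ => F.srel (dual φ) (dual ψ)
  | F.srel φ ψ => F.wuntl (dual φ) (dual ψ)

mutual
/-- The class Σ_i of the syntactic future hierarchy. -/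
inductive SigmaC (Ap : Type) : ℕ → F Ap → Prop where
  | tt (i : ℕ) : SigmaC Ap i F.tt
  | ff (i : ℕ) : SigmaC Ap i F.ff
  | pos (i : ℕ) (a : Ap) : SigmaC Ap i (F.pos a)
  | nlit (i : ℕ) (a : Ap) : SigmaC Ap i (F.nlit a)
  | and {i : ℕ} {φ ψ : F Ap} : SigmaC Ap i φ → SigmaC Ap i ψ → SigmaC Ap i (F.and φ ψ)
  | or {i : ℕ} {φ ψ : F Ap} : SigmaC Ap i φ → SigmaC Ap i ψ → SigmaC Ap i (F.or φ ψ)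
  | ofPi {i : ℕ} {φ : F Ap} : PiC Ap i φ → SigmaC Ap (i + 1) φ
  | next {i : ℕ} {φ : F Ap} : SigmaC Ap (i + 1) φ → SigmaC Ap (i + 1) (F.next φ)
  | untl {i : ℕ} {φ ψ : F Ap} :
      SigmaC Ap (i + 1) φ → SigmaC Ap (i + 1) ψ → SigmaC Ap (i + 1) (F.untl φ ψ)
  | srel {i : ℕ} {φ ψ : F Ap} :
      SigmaC Ap (i + 1) φ → SigmaC Ap (i + 1) ψ → SigmaC Ap (i + 1) (F.srel φ ψ)

/-- The class Π_i of the syntactic future hierarchy. -/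
inductive PiC (Ap : Type) : ℕ → F Ap → Prop where
  | tt (i : ℕ) : PiC Ap i F.tt
  | ff (i : ℕ) : PiC Ap i F.ff
  | pos (i : ℕ) (a : Ap) : PiC Ap i (F.pos a)
  | nlit (i : ℕ) (a : Ap) : PiC Ap i (F.nlit a)
  | and {i : ℕ} {φ ψ : F Ap} : PiC Ap i φ → PiC Ap i ψ → PiC Ap i (F.and φ ψ)
  | or {i : ℕ} {φ ψ : F Ap} : PiC Ap i φ → PiC Ap i ψ → PiC Ap i (F.or φ ψ)
  | ofSigma {i : ℕ} {φ : F Ap} : SigmaC Ap i φ → PiC Ap (i + 1) φ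
  | next {i : ℕ} {φ : F Ap} : PiC Ap (i + 1) φ → PiC Ap (i + 1) (F.next φ)
  | rel {i : ℕ} {φ ψ : F Ap} :
      PiC Ap (i + 1) φ → PiC Ap (i + 1) ψ → PiC Ap (i + 1) (F.rel φ ψ)
  | wuntl {i : ℕ} {φ ψ : F Ap} :
      PiC Ap (i + 1) φ → PiC Ap (i + 1) ψ → PiC Ap (i + 1) (F.wuntl φ ψ)
end

/-- The class Δ_i of the syntactic future hierarchy. -/
inductive DeltaC (Ap : Type) : ℕ → F Ap → Prop where
  | ofSigma {i : ℕ} {φ : F Ap} : SigmaC Ap i φ → DeltaC Ap i φ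
  | ofPi {i : ℕ} {φ : F Ap} : PiC Ap i φ → DeltaC Ap i φ
  | and {i : ℕ} {φ ψ : F Ap} : DeltaC Ap i φ → DeltaC Ap i ψ → DeltaC Ap i (F.and φ ψ)
  | or {i : ℕ} {φ ψ : F Ap} : DeltaC Ap i φ → DeltaC Ap i ψ → DeltaC Ap i (F.or φ ψ)

/-- `LangC B C` is the set of words satisfying every formula of `C` and
no formula of `B \ C` (the language of the context `⟨C,B⟩`). -/
def LangC {Ap : Type} (B C : Finset (F Ap)) : Set (Word Ap) :=
  {w | (∀ ψ ∈ C, Sat w ψ) ∧ ∀ ψ ∈ B, ψ ∉ C → ¬ Sat w ψ}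

/-- Equivalence under the context `⟨C,B⟩`. -/
def EquivUnder {Ap : Type} (B C : Finset (F Ap)) (φ₁ φ₂ : F Ap) : Prop :=
  ∀ w ∈ LangC B C, (Sat w φ₁ ↔ Sat w φ₂)

/-- Disjunction of a list of formulas. -/
def bigOr {Ap : Type} (l : List (F Ap)) : F Ap := l.foldr F.or F.ff

/-- Conjunction of a list of formulas. -/
def bigAnd {Ap : Type} (l : List (F Ap)) : F Ap := l.foldr F.and F.tt

variable {Ap : Type} [DecidableEq Ap]

/-- The set of subformulas of a formula. -/
def sf : F Ap → Finset (F Ap)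
  | F.tt => {F.tt}
  | F.ff => {F.ff}
  | F.pos a => {F.pos a}
  | F.nlit a => {F.nlit a}
  | F.and φ ψ => insert (F.and φ ψ) (sf φ ∪ sf ψ)
  | F.or φ ψ => insert (F.or φ ψ) (sf φ ∪ sf ψ)
  | F.next φ => insert (F.next φ) (sf φ)
  | F.untl φ ψ => insert (F.untl φ ψ) (sf φ ∪ sf ψ)
  | F.wuntl φ ψ => insert (F.wuntl φ ψ) (sf φ ∪ sf ψ)
  | F.rel φ ψ => insert (F.rel φ ψ) (sf φ ∪ sf ψ)
  | F.srel φ ψ => insert (F.srel φ ψ) (sf φ ∪ sf ψ)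

/-- `B_GF(φ) = { GF ψ : χ U ψ or ψ M χ is a subformula of φ }`. -/
def BGF (φ : F Ap) : Finset (F Ap) :=
  (sf φ).biUnion fun σ =>
    match σ with
    | F.untl _ ψ => {GFf ψ}
    | F.srel ψ _ => {GFf ψ}
    | _ => ∅

/-- `B_FG(φ) = { FG ψ : χ W ψ or ψ R χ is a subformula of φ }`. -/
def BFG (φ : F Ap) : Finset (F Ap) :=
  (sf φ).biUnion fun σ =>
    match σ with
    | F.wuntl _ ψ => {FGf ψ}
    | F.rel ψ _ => {FGf ψ}
    | _ => ∅

/-- The basis `B(φ) = B_GF(φ) ∪ B_FG(φ)`. -/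
def Bset (φ : F Ap) : Finset (F Ap) := BGF φ ∪ BFG φ

/-- The argument of a basis formula: `GF ψ ↦ ψ` and `FG ψ ↦ ψ`. -/
def innerArg : F Ap → F Ap
  | F.wuntl (F.untl F.tt ψ) F.ff => ψ      -- GF ψ
  | F.untl F.tt (F.wuntl ψ F.ff) => ψ      -- FG ψ
  | φ => φ

/-- `⇓ψ`: the basis formulas of `B(φ0)` strictly below `op(ψ)` in the order `≺`,
i.e. those whose argument is a subformula of `ψ`. -/
def down (φ0 ψ : F Ap) : Finset (F Ap) :=
  (Bset φ0).filter fun χ => innerArg χ ∈ sf ψ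

/-- The formula `eval(ψ, C)`. -/
def eval (C : Finset (F Ap)) : F Ap → F Ap
  | F.tt => F.tt
  | F.ff => F.ff
  | F.pos a => F.pos a
  | F.nlit a => F.nlit a
  | F.and φ ψ => F.and (eval C φ) (eval C ψ)
  | F.or φ ψ => F.or (eval C φ) (eval C ψ)
  | F.next φ => F.next (eval C φ)
  | F.wuntl φ ψ => F.wuntl (eval C φ) (eval C ψ)
  | F.rel φ ψ => F.rel (eval C φ) (eval C ψ)
  | F.untl φ ψ => if GFf ψ ∈ C then F.wuntl (eval C φ) (eval C ψ) else F.ff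
  | F.srel φ ψ => if GFf φ ∈ C then F.rel (eval C φ) (eval C ψ) else F.ff

/-- The formula `flatten(φ, C)`. -/
def flatten (C : Finset (F Ap)) : F Ap → F Ap
  | F.tt => F.tt
  | F.ff => F.ff
  | F.pos a => F.pos a
  | F.nlit a => F.nlit a
  | F.and φ ψ => F.and (flatten C φ) (flatten C ψ)
  | F.or φ ψ => F.or (flatten C φ) (flatten C ψ)
  | F.next φ => F.next (flatten C φ)
  | F.untl φ ψ => F.untl (flatten C φ) (flatten C ψ)
  | F.srel φ ψ => F.srel (flatten C φ) (flatten C ψ)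
  | F.wuntl φ ψ => F.untl (flatten C φ) (F.or (flatten C ψ) (Gf (eval C φ)))
  | F.rel φ ψ => F.srel (F.or (flatten C φ) (Gf (eval C ψ))) (flatten C ψ)

end LTLNorm

/-!
Basis formulas `GF ψ` and `FG ψ` are prefix-independent, so `L(C|B)` is closed under suffixes.
On words satisfying `C`, `eval(ψ,C)` implies `ψ` (given `GF ψ₂`, the weak until `ψ₁ W ψ₂` implies
`ψ₁ U ψ₂`); on words falsifying the rest of `B_GF`, `ψ` implies `eval(ψ,C)` from some position on
(if `GF ψ₂` fails, `ψ₁ U ψ₂` is eventually false). So on `L(C|B)` the formula `φ W ψ`, i.e.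
`φ U ψ ∨ G φ`, holds iff `φ U (ψ ∨ G eval(φ,C))` does, and dually for `R`. The result is in `Σ₂`
because `eval(φ,C) ∈ Π₁`, and it grows with `C` because `eval` does.
-/

namespace LTLNorm

open Filter

variable {Ap : Type} {w : Word Ap} {φ ψ χ : F Ap}

theorem suff_suff (w : Word Ap) (i j : ℕ) : suff (suff w i) j = suff w (i + j) := by
  funext n
  simp only [suff]
  congr 1
  omega

theorem sat_Ff : Sat w (Ff φ) ↔ ∃ i, Sat (suff w i) φ := by
  simp [Ff, Sat]

theorem sat_Gf : Sat w (Gf φ) ↔ ∀ i, Sat (suff w i) φ := by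
  simp [Gf, Sat]

theorem sat_GFf : Sat w (GFf φ) ↔ ∃ᶠ i in atTop, Sat (suff w i) φ := by
  simp only [GFf, sat_Gf, sat_Ff, suff_suff, frequently_atTop]
  refine forall_congr' fun k => ⟨fun ⟨m, h⟩ => ⟨k + m, k.le_add_right m, h⟩, ?_⟩
  rintro ⟨n, hkn, h⟩
  exact ⟨n - k, by rwa [Nat.add_sub_cancel' hkn]⟩

theorem sat_FGf : Sat w (FGf φ) ↔ ∀ᶠ i in atTop, Sat (suff w i) φ := by
  simp only [FGf, sat_Gf, sat_Ff, suff_suff, eventually_atTop]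
  refine ⟨fun ⟨k, h⟩ => ⟨k, fun n hkn => ?_⟩, fun ⟨k, h⟩ => ⟨k, fun m => h _ (k.le_add_right m)⟩⟩
  simpa [Nat.add_sub_cancel' hkn] using h (n - k)

theorem sat_suff_GFf (i : ℕ) : Sat (suff w i) (GFf φ) ↔ Sat w (GFf φ) := by
  have := frequently_map (f := atTop) (m := (· + i)) (P := fun n => Sat (suff w n) φ)
  rw [map_add_atTop_eq_nat] at this
  simpa [sat_GFf, suff_suff, add_comm] using this.symm

theorem sat_suff_FGf (i : ℕ) : Sat (suff w i) (FGf φ) ↔ Sat w (FGf φ) := by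
  have := eventually_map (f := atTop) (m := (· + i)) (P := fun n => Sat (suff w n) φ)
  rw [map_add_atTop_eq_nat] at this
  simpa [sat_FGf, suff_suff, add_comm] using this.symm

def SuffixClosed (S : Set (Word Ap)) : Prop :=
  ∀ w ∈ S, ∀ i, suff w i ∈ S

def EntailsOn (S : Set (Word Ap)) (φ ψ : F Ap) : Prop :=
  ∀ w ∈ S, Sat w φ → Sat w ψ

def suffixes (w : Word Ap) : Set (Word Ap) :=
  Set.range (suff w)

theorem suffixClosed_univ : SuffixClosed (Set.univ : Set (Word Ap)) :=
  fun _ _ _ => trivial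

theorem suffixClosed_suffixes (w : Word Ap) : SuffixClosed (suffixes w) := by
  rintro _ ⟨i, rfl⟩ j
  exact ⟨i + j, (suff_suff w i j).symm⟩

namespace EntailsOn

variable {S : Set (Word Ap)} {φ' ψ' : F Ap}

protected theorem rfl : EntailsOn S φ φ :=
  fun _ _ => id

theorem ff_left : EntailsOn S F.ff φ :=
  fun _ _ h => h.elim

theorem and (h₁ : EntailsOn S φ φ') (h₂ : EntailsOn S ψ ψ') :
    EntailsOn S (F.and φ ψ) (F.and φ' ψ') :=
  fun w hw => And.imp (h₁ w hw) (h₂ w hw)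

theorem or (h₁ : EntailsOn S φ φ') (h₂ : EntailsOn S ψ ψ') :
    EntailsOn S (F.or φ ψ) (F.or φ' ψ') :=
  fun w hw => Or.imp (h₁ w hw) (h₂ w hw)

theorem next (hS : SuffixClosed S) (h : EntailsOn S φ φ') :
    EntailsOn S (F.next φ) (F.next φ') :=
  fun w hw => h _ (hS w hw 1)

theorem untl (hS : SuffixClosed S) (h₁ : EntailsOn S φ φ') (h₂ : EntailsOn S ψ ψ') :
    EntailsOn S (F.untl φ ψ) (F.untl φ' ψ') := by
  rintro w hw ⟨k, hψ, hφ⟩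
  exact ⟨k, h₂ _ (hS w hw k) hψ, fun j hj => h₁ _ (hS w hw j) (hφ j hj)⟩

theorem srel (hS : SuffixClosed S) (h₁ : EntailsOn S φ φ') (h₂ : EntailsOn S ψ ψ') :
    EntailsOn S (F.srel φ ψ) (F.srel φ' ψ') := by
  rintro w hw ⟨k, hφ, hψ⟩
  exact ⟨k, h₁ _ (hS w hw k) hφ, fun j hj => h₂ _ (hS w hw j) (hψ j hj)⟩

theorem wuntl (hS : SuffixClosed S) (h₁ : EntailsOn S φ φ') (h₂ : EntailsOn S ψ ψ') :
    EntailsOn S (F.wuntl φ ψ) (F.wuntl φ' ψ') := by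
  rintro w hw (hφ | h)
  · exact Or.inl fun j => h₁ _ (hS w hw j) (hφ j)
  · exact Or.inr (untl hS h₁ h₂ w hw h)

theorem rel (hS : SuffixClosed S) (h₁ : EntailsOn S φ φ') (h₂ : EntailsOn S ψ ψ') :
    EntailsOn S (F.rel φ ψ) (F.rel φ' ψ') := by
  rintro w hw (hψ | h)
  · exact Or.inl fun j => h₂ _ (hS w hw j) (hψ j)
  · exact Or.inr (srel hS h₁ h₂ w hw h)

theorem Gf (hS : SuffixClosed S) (h : EntailsOn S φ φ') : EntailsOn S (Gf φ) (Gf φ') :=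
  h.wuntl hS EntailsOn.rfl

end EntailsOn

theorem sat_untl_of_sat_wuntl (h : Sat w (F.wuntl φ ψ)) (hψ : Sat w (Ff ψ)) :
    Sat w (F.untl φ ψ) := by
  obtain ⟨k, hk⟩ := sat_Ff.1 hψ
  rcases h with hφ | h
  exacts [⟨k, hk, fun j _ => hφ j⟩, h]

theorem sat_srel_of_sat_rel (h : Sat w (F.rel φ ψ)) (hφ : Sat w (Ff φ)) :
    Sat w (F.srel φ ψ) := by
  obtain ⟨k, hk⟩ := sat_Ff.1 hφ
  rcases h with hψ | h
  exacts [⟨k, hk, fun j _ => hψ j⟩, h]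

theorem sat_wuntl_of_sat_untl_or_Gf (h : Sat w (F.untl φ (F.or ψ (Gf φ)))) :
    Sat w (F.wuntl φ ψ) := by
  obtain ⟨k, hψ | hG, hφ⟩ := h
  · exact Or.inr ⟨k, hψ, hφ⟩
  · refine Or.inl fun j => ?_
    rcases lt_or_ge j k with hj | hj
    · exact hφ j hj
    · simpa [suff_suff, Nat.add_sub_cancel' hj] using sat_Gf.1 hG (j - k)

theorem sat_rel_of_sat_srel_or_Gf (h : Sat w (F.srel (F.or φ (Gf ψ)) ψ)) :
    Sat w (F.rel φ ψ) := by
  obtain ⟨k, hφ | hG, hψ⟩ := h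
  · exact Or.inr ⟨k, hφ, hψ⟩
  · refine Or.inl fun j => ?_
    rcases le_total j k with hj | hj
    · exact hψ j hj
    · simpa [suff_suff, Nat.add_sub_cancel' hj] using sat_Gf.1 hG (j - k)

theorem sat_untl_or_Gf_of_sat_wuntl {n : ℕ} (h : Sat w (F.wuntl φ ψ))
    (hχ : EntailsOn (suffixes (suff w n)) φ χ) : Sat w (F.untl φ (F.or ψ (Gf χ))) := by
  rcases h with hφ | ⟨k, hψ, hφ⟩
  · refine ⟨n, Or.inr (sat_Gf.2 fun j => hχ _ ⟨j, rfl⟩ ?_), fun j _ => hφ j⟩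
    rw [suff_suff]
    exact hφ _
  · exact ⟨k, Or.inl hψ, hφ⟩

theorem sat_srel_or_Gf_of_sat_rel {n : ℕ} (h : Sat w (F.rel φ ψ))
    (hχ : EntailsOn (suffixes (suff w n)) ψ χ) : Sat w (F.srel (F.or φ (Gf χ)) ψ) := by
  rcases h with hψ | ⟨k, hφ, hψ⟩
  · refine ⟨n, Or.inr (sat_Gf.2 fun j => hχ _ ⟨j, rfl⟩ ?_), fun j _ => hψ j⟩
    rw [suff_suff]
    exact hψ _
  · exact ⟨k, Or.inl hφ, hψ⟩

theorem eventually_not_sat_suffixes_of_not_sat_GFf (h : ¬ Sat w (GFf ψ)) :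
    ∀ᶠ n in atTop, ∀ v ∈ suffixes (suff w n), ¬ Sat v ψ := by
  rw [sat_GFf, not_frequently, ← eventually_forall_ge_atTop] at h
  filter_upwards [h] with n hn
  rintro _ ⟨i, rfl⟩
  rw [suff_suff]
  exact hn _ (n.le_add_right i)

section Basis

variable [DecidableEq Ap]

theorem BGF_and (φ ψ : F Ap) : BGF (F.and φ ψ) = BGF φ ∪ BGF ψ := by
  simp [BGF, sf, Finset.biUnion_insert, Finset.union_biUnion]

theorem BGF_or (φ ψ : F Ap) : BGF (F.or φ ψ) = BGF φ ∪ BGF ψ := by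
  simp [BGF, sf, Finset.biUnion_insert, Finset.union_biUnion]

theorem BGF_next (φ : F Ap) : BGF (F.next φ) = BGF φ := by
  simp [BGF, sf, Finset.biUnion_insert]

theorem BGF_untl (φ ψ : F Ap) : BGF (F.untl φ ψ) = insert (GFf ψ) (BGF φ ∪ BGF ψ) := by
  simp [BGF, sf, Finset.biUnion_insert, Finset.union_biUnion]

theorem BGF_srel (φ ψ : F Ap) : BGF (F.srel φ ψ) = insert (GFf φ) (BGF φ ∪ BGF ψ) := by
  simp [BGF, sf, Finset.biUnion_insert, Finset.union_biUnion]

theorem BGF_wuntl (φ ψ : F Ap) : BGF (F.wuntl φ ψ) = BGF φ ∪ BGF ψ := by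
  simp [BGF, sf, Finset.biUnion_insert, Finset.union_biUnion]

theorem BGF_rel (φ ψ : F Ap) : BGF (F.rel φ ψ) = BGF φ ∪ BGF ψ := by
  simp [BGF, sf, Finset.biUnion_insert, Finset.union_biUnion]

theorem exists_eq_GFf_or_FGf_of_mem_Bset {φ₀ : F Ap} (h : χ ∈ Bset φ₀) :
    ∃ ρ, χ = GFf ρ ∨ χ = FGf ρ := by
  rcases Finset.mem_union.1 h with h | h
  · obtain ⟨σ, -, hσ⟩ := Finset.mem_biUnion.1 h
    cases σ <;> simp_all <;> exact ⟨_, .inl rfl⟩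
  · obtain ⟨σ, -, hσ⟩ := Finset.mem_biUnion.1 h
    cases σ <;> simp_all <;> exact ⟨_, .inr rfl⟩

theorem sat_suff_of_mem_Bset {φ₀ : F Ap} (h : χ ∈ Bset φ₀) (i : ℕ) :
    Sat (suff w i) χ ↔ Sat w χ := by
  obtain ⟨ρ, rfl | rfl⟩ := exists_eq_GFf_or_FGf_of_mem_Bset h
  exacts [sat_suff_GFf i, sat_suff_FGf i]

theorem suffixClosed_LangC {φ₀ : F Ap} {C : Finset (F Ap)} (hC : C ⊆ Bset φ₀) :
    SuffixClosed (LangC (Bset φ₀) C) := by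
  rintro w ⟨hsat, hunsat⟩ i
  exact ⟨fun χ hχ => (sat_suff_of_mem_Bset (hC hχ) i).2 (hsat χ hχ),
    fun χ hχ hχC h => hunsat χ hχ hχC ((sat_suff_of_mem_Bset hχ i).1 h)⟩

end Basis

section Flatten

variable [DecidableEq Ap] {S : Set (Word Ap)} {C C' : Finset (F Ap)}

theorem piC_one_eval (C : Finset (F Ap)) (ψ : F Ap) : PiC Ap 1 (eval C ψ) := by
  induction ψ with
  | tt => exact .tt 1
  | ff => exact .ff 1
  | pos a => exact .pos 1 a
  | nlit a => exact .nlit 1 a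
  | and _ _ ih₁ ih₂ => exact .and ih₁ ih₂
  | or _ _ ih₁ ih₂ => exact .or ih₁ ih₂
  | next _ ih => exact .next ih
  | wuntl _ _ ih₁ ih₂ => exact .wuntl ih₁ ih₂
  | rel _ _ ih₁ ih₂ => exact .rel ih₁ ih₂
  | untl _ _ ih₁ ih₂ => rw [eval]; split_ifs; exacts [.wuntl ih₁ ih₂, .ff 1]
  | srel _ _ ih₁ ih₂ => rw [eval]; split_ifs; exacts [.rel ih₁ ih₂, .ff 1]

theorem sigmaC_two_flatten (C : Finset (F Ap)) (ψ : F Ap) : SigmaC Ap 2 (flatten C ψ) := by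
  induction ψ with
  | tt => exact .tt 2
  | ff => exact .ff 2
  | pos a => exact .pos 2 a
  | nlit a => exact .nlit 2 a
  | and _ _ ih₁ ih₂ => exact .and ih₁ ih₂
  | or _ _ ih₁ ih₂ => exact .or ih₁ ih₂
  | next _ ih => exact .next ih
  | untl _ _ ih₁ ih₂ => exact .untl ih₁ ih₂
  | srel _ _ ih₁ ih₂ => exact .srel ih₁ ih₂
  | wuntl φ _ ih₁ ih₂ => exact .untl ih₁ (.or ih₂ (.ofPi (.wuntl (piC_one_eval C φ) (.ff 1))))
  | rel _ ψ ih₁ ih₂ => exact .srel (.or ih₁ (.ofPi (.wuntl (piC_one_eval C ψ) (.ff 1)))) ih₂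

theorem eval_mono (h : C ⊆ C') (ψ : F Ap) : EntailsOn Set.univ (eval C ψ) (eval C' ψ) := by
  have hS := suffixClosed_univ (Ap := Ap)
  induction ψ with
  | tt | ff | pos | nlit => exact .rfl
  | and _ _ ih₁ ih₂ => exact ih₁.and ih₂
  | or _ _ ih₁ ih₂ => exact ih₁.or ih₂
  | next _ ih => exact ih.next hS
  | wuntl _ _ ih₁ ih₂ => exact ih₁.wuntl hS ih₂
  | rel _ _ ih₁ ih₂ => exact ih₁.rel hS ih₂
  | untl _ ψ ih₁ ih₂ =>
    simp only [eval]
    split_ifs with hC hC'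
    exacts [ih₁.wuntl hS ih₂, absurd (h hC) hC', .ff_left, .rfl]
  | srel ψ _ ih₁ ih₂ =>
    simp only [eval]
    split_ifs with hC hC'
    exacts [ih₁.rel hS ih₂, absurd (h hC) hC', .ff_left, .rfl]

theorem flatten_mono (h : C ⊆ C') (ψ : F Ap) :
    EntailsOn Set.univ (flatten C ψ) (flatten C' ψ) := by
  have hS := suffixClosed_univ (Ap := Ap)
  induction ψ with
  | tt | ff | pos | nlit => exact .rfl
  | and _ _ ih₁ ih₂ => exact ih₁.and ih₂
  | or _ _ ih₁ ih₂ => exact ih₁.or ih₂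
  | next _ ih => exact ih.next hS
  | untl _ _ ih₁ ih₂ => exact ih₁.untl hS ih₂
  | srel _ _ ih₁ ih₂ => exact ih₁.srel hS ih₂
  | wuntl φ _ ih₁ ih₂ => exact ih₁.untl hS (ih₂.or ((eval_mono h φ).Gf hS))
  | rel _ ψ ih₁ ih₂ => exact (ih₁.or ((eval_mono h ψ).Gf hS)).srel hS ih₂

theorem eval_sound (hS : SuffixClosed S) (hC : ∀ w ∈ S, ∀ χ ∈ C, Sat w χ) (ψ : F Ap) :
    EntailsOn S (eval C ψ) ψ := by
  induction ψ with
  | tt | ff | pos | nlit => exact .rfl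
  | and _ _ ih₁ ih₂ => exact ih₁.and ih₂
  | or _ _ ih₁ ih₂ => exact ih₁.or ih₂
  | next _ ih => exact ih.next hS
  | wuntl _ _ ih₁ ih₂ => exact ih₁.wuntl hS ih₂
  | rel _ _ ih₁ ih₂ => exact ih₁.rel hS ih₂
  | untl _ ψ ih₁ ih₂ =>
    simp only [eval]
    split_ifs with hψ
    · exact fun w hw h => sat_untl_of_sat_wuntl (ih₁.wuntl hS ih₂ w hw h)
        (sat_Ff.2 (sat_GFf.1 (hC w hw _ hψ)).exists)
    · exact .ff_left
  | srel ψ _ ih₁ ih₂ =>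
    simp only [eval]
    split_ifs with hψ
    · exact fun w hw h => sat_srel_of_sat_rel (ih₁.rel hS ih₂ w hw h)
        (sat_Ff.2 (sat_GFf.1 (hC w hw _ hψ)).exists)
    · exact .ff_left

theorem eval_eventually_complete (ψ : F Ap) (hw : ∀ χ ∈ BGF ψ, Sat w χ → χ ∈ C) :
    ∀ᶠ n in atTop, EntailsOn (suffixes (suff w n)) ψ (eval C ψ) := by
  have hS (n : ℕ) := suffixClosed_suffixes (suff w n)
  induction ψ with
  | tt | ff | pos | nlit => exact .of_forall fun _ => .rfl
  | and _ _ ih₁ ih₂ =>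
    rw [BGF_and, Finset.forall_mem_union] at hw
    filter_upwards [ih₁ hw.1, ih₂ hw.2] with n h₁ h₂ using h₁.and h₂
  | or _ _ ih₁ ih₂ =>
    rw [BGF_or, Finset.forall_mem_union] at hw
    filter_upwards [ih₁ hw.1, ih₂ hw.2] with n h₁ h₂ using h₁.or h₂
  | next _ ih =>
    rw [BGF_next] at hw
    filter_upwards [ih hw] with n h using h.next (hS n)
  | wuntl _ _ ih₁ ih₂ =>
    rw [BGF_wuntl, Finset.forall_mem_union] at hw
    filter_upwards [ih₁ hw.1, ih₂ hw.2] with n h₁ h₂ using h₁.wuntl (hS n) h₂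
  | rel _ _ ih₁ ih₂ =>
    rw [BGF_rel, Finset.forall_mem_union] at hw
    filter_upwards [ih₁ hw.1, ih₂ hw.2] with n h₁ h₂ using h₁.rel (hS n) h₂
  | untl _ ψ ih₁ ih₂ =>
    rw [BGF_untl, Finset.forall_mem_insert, Finset.forall_mem_union] at hw
    obtain ⟨hψ, hw₁, hw₂⟩ := hw
    simp only [eval]
    split_ifs with hψC
    · filter_upwards [ih₁ hw₁, ih₂ hw₂] with n h₁ h₂
      exact fun v hv h => h₁.wuntl (hS n) h₂ v hv (Or.inr h)
    · filter_upwards [eventually_not_sat_suffixes_of_not_sat_GFf (mt hψ hψC)] with n hn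
      rintro v hv ⟨k, hk, -⟩
      exact hn _ (hS n v hv k) hk
  | srel ψ _ ih₁ ih₂ =>
    rw [BGF_srel, Finset.forall_mem_insert, Finset.forall_mem_union] at hw
    obtain ⟨hψ, hw₁, hw₂⟩ := hw
    simp only [eval]
    split_ifs with hψC
    · filter_upwards [ih₁ hw₁, ih₂ hw₂] with n h₁ h₂
      exact fun v hv h => h₁.rel (hS n) h₂ v hv (Or.inr h)
    · filter_upwards [eventually_not_sat_suffixes_of_not_sat_GFf (mt hψ hψC)] with n hn
      rintro v hv ⟨k, hk, -⟩
      exact hn _ (hS n v hv k) hk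

theorem flatten_sound (hS : SuffixClosed S) (hC : ∀ w ∈ S, ∀ χ ∈ C, Sat w χ) (ψ : F Ap) :
    EntailsOn S (flatten C ψ) ψ := by
  induction ψ with
  | tt | ff | pos | nlit => exact .rfl
  | and _ _ ih₁ ih₂ => exact ih₁.and ih₂
  | or _ _ ih₁ ih₂ => exact ih₁.or ih₂
  | next _ ih => exact ih.next hS
  | untl _ _ ih₁ ih₂ => exact ih₁.untl hS ih₂
  | srel _ _ ih₁ ih₂ => exact ih₁.srel hS ih₂
  | wuntl φ _ ih₁ ih₂ =>
    exact fun w hw h => sat_wuntl_of_sat_untl_or_Gf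
      (ih₁.untl hS (ih₂.or ((eval_sound hS hC φ).Gf hS)) w hw h)
  | rel _ ψ ih₁ ih₂ =>
    exact fun w hw h => sat_rel_of_sat_srel_or_Gf
      ((ih₁.or ((eval_sound hS hC ψ).Gf hS)).srel hS ih₂ w hw h)

theorem flatten_complete (hS : SuffixClosed S) (ψ : F Ap)
    (hC : ∀ χ ∈ BGF ψ, ∀ w ∈ S, Sat w χ → χ ∈ C) : EntailsOn S ψ (flatten C ψ) := by
  induction ψ with
  | tt | ff | pos | nlit => exact .rfl
  | and _ _ ih₁ ih₂ =>
    rw [BGF_and, Finset.forall_mem_union] at hC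
    exact (ih₁ hC.1).and (ih₂ hC.2)
  | or _ _ ih₁ ih₂ =>
    rw [BGF_or, Finset.forall_mem_union] at hC
    exact (ih₁ hC.1).or (ih₂ hC.2)
  | next _ ih =>
    rw [BGF_next] at hC
    exact (ih hC).next hS
  | untl _ _ ih₁ ih₂ =>
    rw [BGF_untl, Finset.forall_mem_insert, Finset.forall_mem_union] at hC
    exact (ih₁ hC.2.1).untl hS (ih₂ hC.2.2)
  | srel _ _ ih₁ ih₂ =>
    rw [BGF_srel, Finset.forall_mem_insert, Finset.forall_mem_union] at hC
    exact (ih₁ hC.2.1).srel hS (ih₂ hC.2.2)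
  | wuntl φ _ ih₁ ih₂ =>
    rw [BGF_wuntl, Finset.forall_mem_union] at hC
    intro w hw h
    obtain ⟨n, hn⟩ := (eval_eventually_complete (C := C) φ fun χ hχ => hC.1 χ hχ w hw).exists
    exact (ih₁ hC.1).untl hS ((ih₂ hC.2).or .rfl) w hw (sat_untl_or_Gf_of_sat_wuntl h hn)
  | rel _ ψ ih₁ ih₂ =>
    rw [BGF_rel, Finset.forall_mem_union] at hC
    intro w hw h
    obtain ⟨n, hn⟩ := (eval_eventually_complete (C := C) ψ fun χ hχ => hC.2 χ hχ w hw).exists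
    exact ((ih₁ hC.1).or .rfl).srel hS (ih₂ hC.2) w hw (sat_srel_or_Gf_of_sat_rel h hn)

end Flatten

/-- properties of `flatten(φ,C)`. -/
theorem flatten_main {Ap : Type} [Fintype Ap] [DecidableEq Ap] (φ : F Ap) :
    ∀ C ⊆ Bset φ,
      SigmaC Ap 2 (flatten C φ) ∧
      EquivUnder (Bset φ) C φ (flatten C φ) ∧
      (∀ C' : Finset (F Ap), C ⊆ C' → C' ⊆ Bset φ →
        Entails (flatten C φ) (flatten C' φ)) := by
  intro C hC
  have hS := suffixClosed_LangC hC
  have hGF : ∀ χ ∈ BGF φ, ∀ w ∈ LangC (Bset φ) C, Sat w χ → χ ∈ C :=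
    fun χ hχ w hw h => by_contra fun hχC => hw.2 χ (Finset.mem_union_left _ hχ) hχC h
  refine ⟨sigmaC_two_flatten C φ, fun w hw => ⟨?_, ?_⟩, fun C' hCC' _ w => ?_⟩
  · exact flatten_complete hS φ hGF w hw
  · exact flatten_sound hS (fun _ hv => hv.1) φ w hw
  · exact flatten_mono hCC' φ w trivial

end LTLNorm
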